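/- Let l > 0, α ∈ (0,1), and let w^α be as above. Let w : [−l/2, l/2] → ℝ be Lipschitz with 0 ≤ w' ≤ 1 a.e., w(0) = 0, ∫ w² dx = ∫ (w^α)² dx, and w ≠ w^α. Then ∫_{−l/2}^{l/2} w'(x)² w(x)² dx > ∫_{−l/2}^{l/2} (w^α)'(x)² (w^α)(x)² dx = (l³/12)α⁴. In other words, w^α is the unique minimizer of F₂(w) = ∫ w'² w² dx in its L²-constraint class. -/

import Mathlib

/-!
Put `m = l/2`, `u = w²/2` and `uA = (w^α)²/2`, so that `∫ w'² w² = ∫ u'²`. The derivative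
`vA = uA'` is odd, piecewise linear and vanishes at `±m`; its derivative is
`1/(1-α²)` on the core `[-α²m, α²m]` minus the constant `α²/(1-α²)`. Integrating by parts,
`∫ u'² = ∫ vA² + ∫ (u' - vA)² + 2/(1-α²) ∫_core (uA - u) + 2α²/(1-α²) ∫ (u - uA)`.
The last integral vanishes by the `L²` constraint, and the core integral is nonnegative since
`|w x| ≤ |x|` gives `u ≤ x²/2 = uA` there. Finally `∫ (u' - vA)² > 0`: otherwise `u = uA`
(both vanish at `0`), and then `w = w^α`, because `w` and `w^α` both have the sign of `x`.
-/

open MeasureTheory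

/-- The odd profile `w^α` on `[-l/2, l/2]`. -/
noncomputable def wA (l α x : ℝ) : ℝ :=
  if 0 ≤ x then
    (if x ≤ α ^ 2 * l / 2 then x
      else α * l / 2 * Real.sqrt (1 - (1 - x / (l / 2)) ^ 2 / (1 - α ^ 2)))
  else
    -(if -x ≤ α ^ 2 * l / 2 then -x
      else α * l / 2 * Real.sqrt (1 - (1 - (-x) / (l / 2)) ^ 2 / (1 - α ^ 2)))

open Set Filter Topology intervalIntegral

theorem IntervalIntegrable.sub_sq {f g : ℝ → ℝ} {p q : ℝ}
    (hf2 : IntervalIntegrable (fun x => f x ^ 2) volume p q) (hf : IntervalIntegrable f volume p q)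
    (hg : ContinuousOn g (uIcc p q)) :
    IntervalIntegrable (fun x => (f x - g x) ^ 2) volume p q :=
  ((hf2.sub ((hf.continuousOn_mul hg).const_mul 2)).add (hg.pow 2).intervalIntegrable).congr
    fun x _ => by simp only [Pi.pow_apply]; ring

theorem AbsolutelyContinuousOnInterval.sub_le_sub_of_ae_deriv_le {f g : ℝ → ℝ} {a b : ℝ}
    (hf : AbsolutelyContinuousOnInterval f a b) (hg : AbsolutelyContinuousOnInterval g a b)
    (hab : a ≤ b) (h : ∀ᵐ x ∂volume.restrict (Icc a b), deriv f x ≤ deriv g x) :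
    f b - f a ≤ g b - g a := by
  rw [← hf.integral_deriv_eq_sub, ← hg.integral_deriv_eq_sub]
  exact integral_mono_ae_restrict hab hf.intervalIntegrable_deriv hg.intervalIntegrable_deriv h

theorem AbsolutelyContinuousOnInterval.mem_uIcc_of_ae_deriv_mem_Icc {f : ℝ → ℝ} {c x : ℝ}
    (hf : AbsolutelyContinuousOnInterval f c x)
    (h : ∀ᵐ t ∂volume.restrict (uIcc c x), deriv f t ∈ Icc 0 1) :
    f x - f c ∈ uIcc 0 (x - c) := by
  have key : ∀ {a b : ℝ}, a ≤ b → AbsolutelyContinuousOnInterval f a b →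
      (∀ᵐ t ∂volume.restrict (Icc a b), deriv f t ∈ Icc 0 1) →
      f b - f a ∈ Icc 0 (b - a) := by
    intro a b hab hf h
    have hconst : AbsolutelyContinuousOnInterval (fun _ => (0 : ℝ)) a b :=
      (LipschitzWith.const 0).lipschitzOnWith.absolutelyContinuousOnInterval
    have hid : AbsolutelyContinuousOnInterval (fun t : ℝ => t) a b :=
      LipschitzWith.id.lipschitzOnWith.absolutelyContinuousOnInterval
    constructor
    · simpa using hconst.sub_le_sub_of_ae_deriv_le hf hab (h.mono fun t ht => by simpa using ht.1)
    · simpa using hf.sub_le_sub_of_ae_deriv_le hid hab (h.mono fun t ht => by simpa using ht.2)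
  rcases le_total c x with hcx | hxc
  · rw [uIcc_of_le (sub_nonneg.2 hcx)]
    rw [uIcc_of_le hcx] at h
    exact key hcx hf h
  · rw [uIcc_of_ge (sub_nonpos.2 hxc)]
    rw [uIcc_of_ge hxc] at h
    have := key hxc hf.symm h
    exact ⟨by linarith [this.2], by linarith [this.1]⟩

theorem AbsolutelyContinuousOnInterval.integral_deriv_sub_deriv_sq_pos {u g : ℝ → ℝ}
    {p q c t : ℝ}
    (hu : AbsolutelyContinuousOnInterval u p q) (hg : AbsolutelyContinuousOnInterval g p q)
    (hint : IntervalIntegrable (fun x => (deriv u x - deriv g x) ^ 2) volume p q)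
    (hpq : p ≤ q) (hc : c ∈ Icc p q) (huc : u c = g c) (ht : t ∈ Icc p q)
    (hut : u t ≠ g t) :
    0 < ∫ x in p..q, (deriv u x - deriv g x) ^ 2 := by
  refine (integral_nonneg hpq fun x _ => sq_nonneg _).lt_of_ne fun h0 => hut ?_
  have hae : ∀ᵐ x ∂volume.restrict (Ioc p q), deriv u x = deriv g x := by
    filter_upwards [(integral_eq_zero_iff_of_le_of_nonneg_ae hpq
      (Eventually.of_forall fun x => sq_nonneg _) hint).1 h0.symm] with x hx
    exact sub_eq_zero.1 (pow_eq_zero_iff two_ne_zero |>.1 hx)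
  have hct : ∫ x in c..t, deriv u x = ∫ x in c..t, deriv g x := by
    refine integral_congr_ae ?_
    filter_upwards [(ae_restrict_iff' measurableSet_Ioc).1 hae] with x hx hxct
    exact hx (Ioc_subset_Ioc (le_min hc.1 ht.1) (max_le hc.2 ht.2) hxct)
  have hsub : uIcc c t ⊆ uIcc p q := by
    rw [uIcc_of_le hpq]; exact uIcc_subset_Icc hc ht
  rw [(hu.mono hsub).integral_deriv_eq_sub, (hg.mono hsub).integral_deriv_eq_sub, huc] at hct
  linarith

theorem AbsolutelyContinuousOnInterval.integral_deriv_sq_eq {u g : ℝ → ℝ} {p q : ℝ}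
    (hu : AbsolutelyContinuousOnInterval u p q)
    (hu2 : IntervalIntegrable (fun x => deriv u x ^ 2) volume p q)
    (hg : AbsolutelyContinuousOnInterval g p q) (hg' : AbsolutelyContinuousOnInterval (deriv g) p q)
    (hp : deriv g p = 0) (hq : deriv g q = 0) :
    ∫ x in p..q, deriv u x ^ 2 = (∫ x in p..q, deriv g x ^ 2)
      + (∫ x in p..q, (deriv u x - deriv g x) ^ 2)
      - 2 * ∫ x in p..q, deriv (deriv g) x * (u x - g x) := by
  have hg'c := hg'.continuousOn
  have hg2 : IntervalIntegrable (fun x => deriv g x ^ 2) volume p q :=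
    (hg'c.pow 2).intervalIntegrable
  have hgu : IntervalIntegrable (fun x => deriv g x * deriv u x) volume p q :=
    hu.intervalIntegrable_deriv.continuousOn_mul hg'c
  have hsub2 := hu2.sub_sq hu.intervalIntegrable_deriv hg'c
  have hgsub : IntervalIntegrable (fun x => deriv g x * (deriv u x - deriv g x)) volume p q :=
    (hgu.sub hg2).congr fun x _ => by ring
  have hibp : ∫ x in p..q, deriv g x * (deriv u x - deriv g x)
      = -∫ x in p..q, deriv (deriv g) x * (u x - g x) := by
    have := integral_mul_deriv_eq_deriv_mul hg' (hu.fun_sub hg)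
    simp only [hp, hq, zero_mul, sub_zero, zero_sub] at this
    rw [← this]
    refine integral_congr_ae ?_
    filter_upwards [hu.ae_differentiableAt, hg.ae_differentiableAt] with x hux hgx hx
    rw [deriv_fun_sub (hux (uIoc_subset_uIcc hx)) (hgx (uIoc_subset_uIcc hx))]
  calc ∫ x in p..q, deriv u x ^ 2
      = ∫ x in p..q, (deriv g x ^ 2 + (deriv u x - deriv g x) ^ 2
          + 2 * (deriv g x * (deriv u x - deriv g x))) :=
        integral_congr fun x _ => by ring
    _ = _ := by
      rw [integral_add (hg2.add hsub2) (hgsub.const_mul 2), integral_add hg2 hsub2,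
        intervalIntegral.integral_const_mul, hibp]
      ring

theorem deriv_sq_div_two {f : ℝ → ℝ} {x : ℝ} (hf : DifferentiableAt ℝ f x) :
    deriv (fun t => f t ^ 2 / 2) x = f x * deriv f x := by
  rw [((hf.hasDerivAt.fun_pow 2).div_const 2).deriv]
  ring

theorem intervalIntegrable_deriv_sq_of_ae_abs_le {f : ℝ → ℝ} {p q K : ℝ} (hpq : p ≤ q)
    (h : ∀ᵐ x ∂volume.restrict (Icc p q), |deriv f x| ≤ K) :
    IntervalIntegrable (fun x => deriv f x ^ 2) volume p q := by
  refine (intervalIntegrable_const (c := K ^ 2)).mono_fun'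
    ((measurable_deriv f).pow_const 2).aestronglyMeasurable ?_
  rw [uIoc_of_le hpq]
  filter_upwards [ae_restrict_of_ae_restrict_of_subset Ioc_subset_Icc_self h] with x hx
  rw [Real.norm_eq_abs, abs_pow]
  exact pow_le_pow_left₀ (abs_nonneg _) hx 2

theorem integral_mul_sq_eq_integral_deriv_sq {w w' : ℝ → ℝ} {p q : ℝ} (hpq : p ≤ q)
    (h : ∀ᵐ x ∂volume.restrict (Icc p q), HasDerivAt w (w' x) x) :
    ∫ x in p..q, w' x ^ 2 * w x ^ 2 = ∫ x in p..q, deriv (fun t => w t ^ 2 / 2) x ^ 2 := by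
  refine integral_congr_ae_restrict ?_
  rw [uIoc_of_le hpq]
  filter_upwards [ae_restrict_of_ae_restrict_of_subset Ioc_subset_Icc_self h] with x hx
  rw [deriv_sq_div_two hx.differentiableAt, hx.deriv]
  ring

/-- `((w^α)²/2)'` for `m = l/2`: `x` clamped between the lines `∓α²/(1-α²)·(m ± x)`,
which cross the diagonal at `∓α²m`. -/
noncomputable def vA (m α x : ℝ) : ℝ :=
  max (-(α ^ 2 / (1 - α ^ 2) * (m + x))) (min x (α ^ 2 / (1 - α ^ 2) * (m - x)))

/-- `(w^α)²/2` for `m = l/2` (see `wA_sq`), defined as the primitive of `vA` vanishing at `0`. -/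
noncomputable def uA (m α x : ℝ) : ℝ := ∫ t in 0..x, vA m α t

section profile
variable {m α x : ℝ}

lemma vA_of_abs_le (hα : α ∈ Ioo 0 1) (hx : |x| ≤ α ^ 2 * m) : vA m α x = x := by
  obtain ⟨h0, h1⟩ := hα
  have h2 : 0 < 1 - α ^ 2 := by nlinarith
  rw [abs_le] at hx
  have hle : x ≤ α ^ 2 / (1 - α ^ 2) * (m - x) := by
    rw [div_mul_eq_mul_div, le_div_iff₀ h2]; nlinarith
  have hge : -(α ^ 2 / (1 - α ^ 2) * (m + x)) ≤ x := by
    rw [div_mul_eq_mul_div, neg_le, le_div_iff₀ h2]; nlinarith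
  rw [vA, min_eq_left hle, max_eq_right hge]

lemma vA_of_ge (hα : α ∈ Ioo 0 1) (hm : 0 ≤ m) (hx : α ^ 2 * m ≤ x) :
    vA m α x = α ^ 2 / (1 - α ^ 2) * (m - x) := by
  obtain ⟨h0, h1⟩ := hα
  have h2 : 0 < 1 - α ^ 2 := by nlinarith
  have hc : 0 ≤ α ^ 2 / (1 - α ^ 2) := by positivity
  have hle : α ^ 2 / (1 - α ^ 2) * (m - x) ≤ x := by
    rw [div_mul_eq_mul_div, div_le_iff₀ h2]; nlinarith
  rw [vA, min_eq_right hle, max_eq_right (by nlinarith)]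

lemma vA_neg (hα : α ∈ Ioo 0 1) (hm : 0 ≤ m) (x : ℝ) : vA m α (-x) = -vA m α x := by
  have hc : 0 ≤ α ^ 2 / (1 - α ^ 2) := div_nonneg (sq_nonneg α) (by nlinarith [hα.1, hα.2])
  unfold vA
  generalize α ^ 2 / (1 - α ^ 2) = c at hc ⊢
  simp only [min_def, max_def]
  split_ifs <;> nlinarith

lemma vA_of_le (hα : α ∈ Ioo 0 1) (hm : 0 ≤ m) (hx : x ≤ -(α ^ 2 * m)) :
    vA m α x = -(α ^ 2 / (1 - α ^ 2) * (m + x)) := by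
  rw [← neg_neg x, vA_neg hα hm, vA_of_ge hα hm (by linarith)]
  ring

lemma continuous_vA : Continuous (vA m α) := by
  unfold vA; fun_prop

lemma absolutelyContinuousOnInterval_vA (a b : ℝ) :
    AbsolutelyContinuousOnInterval (vA m α) a b := by
  set c := α ^ 2 / (1 - α ^ 2)
  have affine : ∀ e d : ℝ, LipschitzWith ‖d‖₊ fun x : ℝ => e + d * x := fun e d =>
    LipschitzWith.of_dist_le_mul fun x y => by simp [Real.dist_eq, ← mul_sub, abs_mul]
  have h := (affine (-(c * m)) (-c)).max (LipschitzWith.id.min (affine (c * m) (-c)))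
  have hv : vA m α = fun x => max (-(c * m) + -c * x) (min (id x) (c * m + -c * x)) := by
    funext x; simp only [vA, id, c]; ring_nf
  rw [hv]
  exact h.lipschitzOnWith.absolutelyContinuousOnInterval

lemma sq_mul_le_self (hα : α ∈ Ioo 0 1) (hm : 0 ≤ m) : α ^ 2 * m ≤ m := by
  have : α ^ 2 ≤ 1 := by nlinarith [hα.1, hα.2]
  nlinarith

lemma vA_self (hα : α ∈ Ioo 0 1) (hm : 0 ≤ m) : vA m α m = 0 := by
  rw [vA_of_ge hα hm (sq_mul_le_self hα hm), sub_self, mul_zero]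

lemma vA_neg_self (hα : α ∈ Ioo 0 1) (hm : 0 ≤ m) : vA m α (-m) = 0 := by
  rw [vA_neg hα hm, vA_self hα hm, neg_zero]

lemma hasDerivAt_vA_of_abs_lt (hα : α ∈ Ioo 0 1) (hx : |x| < α ^ 2 * m) :
    HasDerivAt (vA m α) 1 x := by
  refine (hasDerivAt_id x).congr_of_eventuallyEq ?_
  filter_upwards [(isOpen_lt continuous_abs continuous_const).mem_nhds hx] with y hy
  exact vA_of_abs_le hα (le_of_lt hy)

lemma hasDerivAt_vA_of_gt (hα : α ∈ Ioo 0 1) (hm : 0 ≤ m) (hx : α ^ 2 * m < x) :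
    HasDerivAt (vA m α) (-(α ^ 2 / (1 - α ^ 2))) x := by
  have h := ((hasDerivAt_id x).const_sub m).const_mul (α ^ 2 / (1 - α ^ 2))
  refine (h.congr_deriv (by simp)).congr_of_eventuallyEq ?_
  filter_upwards [Ioi_mem_nhds hx] with y hy
  exact vA_of_ge hα hm (le_of_lt hy)

lemma hasDerivAt_vA_of_lt (hα : α ∈ Ioo 0 1) (hm : 0 ≤ m) (hx : x < -(α ^ 2 * m)) :
    HasDerivAt (vA m α) (-(α ^ 2 / (1 - α ^ 2))) x := by
  have h := (((hasDerivAt_id x).const_add m).const_mul (α ^ 2 / (1 - α ^ 2))).neg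
  refine (h.congr_deriv (by simp)).congr_of_eventuallyEq ?_
  filter_upwards [Iio_mem_nhds hx] with y hy
  exact vA_of_le hα hm (le_of_lt hy)

lemma integral_deriv_vA_mul (hα : α ∈ Ioo 0 1) (hm : 0 ≤ m) {h : ℝ → ℝ}
    (hh : IntervalIntegrable h volume (-m) m) :
    ∫ x in (-m)..m, deriv (vA m α) x * h x
      = (1 + α ^ 2 / (1 - α ^ 2)) * (∫ x in (-(α ^ 2 * m))..(α ^ 2 * m), h x)
        - α ^ 2 / (1 - α ^ 2) * ∫ x in (-m)..m, h x := by
  set a := α ^ 2 * m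
  have ha : 0 ≤ a := by positivity
  have ham : a ≤ m := sq_mul_le_self hα hm
  have hsub : ∀ {p q : ℝ}, -m ≤ p → p ≤ m → -m ≤ q → q ≤ m →
      IntervalIntegrable h volume p q := fun hp hp' hq hq' =>
    hh.mono_set <| uIcc_subset_uIcc (mem_uIcc.2 (.inl ⟨hp, hp'⟩))
      (mem_uIcc.2 (.inl ⟨hq, hq'⟩))
  have piece : ∀ {p q d : ℝ}, -m ≤ p → p ≤ q → q ≤ m →
      (∀ x ∈ Ioo p q, deriv (vA m α) x = d) →
      IntervalIntegrable (fun x => deriv (vA m α) x * h x) volume p q ∧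
        ∫ x in p..q, deriv (vA m α) x * h x = d * ∫ x in p..q, h x := by
    intro p q d hp hpq hq hd
    have heq : EqOn (fun x => d * h x) (fun x => deriv (vA m α) x * h x) (Ioo p q) :=
      fun x hx => by simp only [hd x hx]
    refine ⟨((hsub hp (hpq.trans hq) (hp.trans hpq) hq).const_mul d).congr_uIoo
      (by rwa [uIoo_of_le hpq]), ?_⟩
    rw [integral_congr_Ioo_of_le hpq heq.symm, intervalIntegral.integral_const_mul]
  obtain ⟨hintL, heqL⟩ := piece le_rfl (neg_le_neg ham) (by linarith)
    fun x hx => (hasDerivAt_vA_of_lt hα hm hx.2).deriv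
  obtain ⟨hintM, heqM⟩ := piece (neg_le_neg ham) (by linarith) ham
    fun x hx => (hasDerivAt_vA_of_abs_lt hα (abs_lt.2 hx)).deriv
  obtain ⟨hintR, heqR⟩ := piece (by linarith) ham le_rfl
    fun x hx => (hasDerivAt_vA_of_gt hα hm hx.1).deriv
  have hhL : IntervalIntegrable h volume (-m) (-a) :=
    hsub le_rfl (by linarith) (by linarith) (by linarith)
  have hhM : IntervalIntegrable h volume (-a) a :=
    hsub (by linarith) (by linarith) (by linarith) ham
  have hhR : IntervalIntegrable h volume a m := hsub (by linarith) ham (by linarith) le_rfl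
  rw [← integral_add_adjacent_intervals (hintL.trans hintM) hintR,
    ← integral_add_adjacent_intervals hintL hintM, heqL, heqM, heqR,
    ← integral_add_adjacent_intervals (hhL.trans hhM) hhR,
    ← integral_add_adjacent_intervals hhL hhM]
  ring

lemma integral_vA_sq (hα : α ∈ Ioo 0 1) (hm : 0 ≤ m) :
    ∫ x in (-m)..m, vA m α x ^ 2 = 2 * m ^ 3 * α ^ 4 / 3 := by
  set a := α ^ 2 * m
  set c := α ^ 2 / (1 - α ^ 2)
  have ha : 0 ≤ a := by positivity
  have ham : a ≤ m := sq_mul_le_self hα hm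
  have hi : ∀ p q, IntervalIntegrable (fun x => vA m α x ^ 2) volume p q :=
    fun p q => (continuous_vA.pow 2).intervalIntegrable p q
  have heqL : ∫ x in (-m)..(-a), vA m α x ^ 2 = c ^ 2 * (m - a) ^ 3 / 3 := by
    rw [integral_congr (g := fun x => (-(c * (m + x))) ^ 2) fun x hx => by
      rw [uIcc_of_le (by linarith)] at hx; rw [vA_of_le hα hm hx.2]]
    rw [integral_comp_add_left (fun x => (-(c * x)) ^ 2) m]
    simp [mul_pow, integral_pow]
    ring
  have heqM : ∫ x in (-a)..a, vA m α x ^ 2 = 2 * a ^ 3 / 3 := by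
    rw [integral_congr (g := fun x => x ^ 2) fun x hx => by
      rw [uIcc_of_le (by linarith)] at hx; simp only [vA_of_abs_le hα (abs_le.2 hx)]]
    simp [integral_pow]
    ring
  have heqR : ∫ x in a..m, vA m α x ^ 2 = c ^ 2 * (m - a) ^ 3 / 3 := by
    rw [integral_congr (g := fun x => (c * (m - x)) ^ 2) fun x hx => by
      rw [uIcc_of_le ham] at hx; rw [vA_of_ge hα hm hx.1]]
    rw [integral_comp_sub_left (fun x => (c * x) ^ 2) m]
    simp [mul_pow, integral_pow]
    ring
  rw [← integral_add_adjacent_intervals ((hi (-m) (-a)).trans (hi (-a) a)) (hi a m),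
    ← integral_add_adjacent_intervals (hi _ _) (hi _ _), heqL, heqM, heqR]
  have h2 : 1 - α ^ 2 ≠ 0 := by nlinarith [hα.1, hα.2]
  simp only [a, c]
  field_simp
  ring

lemma hasDerivAt_uA (x : ℝ) : HasDerivAt (uA m α) (vA m α x) x :=
  (continuous_vA.integral_hasStrictDerivAt 0 x).hasDerivAt

lemma deriv_uA : deriv (uA m α) = vA m α := funext fun x => (hasDerivAt_uA x).deriv

lemma absolutelyContinuousOnInterval_uA (hm : 0 ≤ m) :
    AbsolutelyContinuousOnInterval (uA m α) (-m) m :=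
  (continuous_vA.intervalIntegrable _ _).absolutelyContinuousOnInterval_intervalIntegral
    (mem_uIcc.2 (.inl ⟨by linarith, hm⟩))

lemma uA_of_abs_le (hα : α ∈ Ioo 0 1) (hx : |x| ≤ α ^ 2 * m) : uA m α x = x ^ 2 / 2 := by
  have hvA : EqOn (vA m α) (fun t => t) (uIcc 0 x) := fun t ht =>
    vA_of_abs_le hα (by simpa using (abs_sub_left_of_mem_uIcc ht).trans (by simpa using hx))
  rw [uA, integral_congr hvA, integral_id]
  ring

lemma uA_neg (hα : α ∈ Ioo 0 1) (hm : 0 ≤ m) (x : ℝ) : uA m α (-x) = uA m α x := by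
  calc uA m α (-x) = -∫ t in (-x)..(-0), vA m α t := by rw [uA, neg_zero, integral_symm]
    _ = -∫ t in 0..x, vA m α (-t) := by rw [integral_comp_neg]
    _ = uA m α x := by simp only [vA_neg hα hm, intervalIntegral.integral_neg, neg_neg, uA]

lemma uA_of_ge (hα : α ∈ Ioo 0 1) (hm : 0 ≤ m) (hx : α ^ 2 * m ≤ x) :
    uA m α x = α ^ 2 * m ^ 2 / 2 - α ^ 2 / (1 - α ^ 2) * (m - x) ^ 2 / 2 := by
  set a := α ^ 2 * m
  have hi : ∀ p q, IntervalIntegrable (vA m α) volume p q :=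
    fun p q => continuous_vA.intervalIntegrable p q
  have hvA : EqOn (vA m α) (fun t => α ^ 2 / (1 - α ^ 2) * (m - t)) (uIcc a x) := fun t ht =>
    vA_of_ge hα hm (by rw [uIcc_of_le hx] at ht; exact ht.1)
  rw [uA, ← integral_add_adjacent_intervals (hi 0 a) (hi a x), ← uA,
    uA_of_abs_le hα (by rw [abs_of_nonneg (by positivity)]), integral_congr hvA,
    integral_comp_sub_left (fun t => α ^ 2 / (1 - α ^ 2) * t) m,
    intervalIntegral.integral_const_mul, integral_id]
  have h2 : 1 - α ^ 2 ≠ 0 := by nlinarith [hα.1, hα.2]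
  simp only [a]
  field_simp
  ring

lemma vA_pos (hα : α ∈ Ioo 0 1) (hx : x ∈ Ioo 0 m) : 0 < vA m α x := by
  have hc : 0 < α ^ 2 / (1 - α ^ 2) := div_pos (pow_pos hα.1 2) (by nlinarith [hα.1, hα.2])
  exact (lt_min hx.1 (mul_pos hc (sub_pos.2 hx.2))).trans_le (le_max_right _ _)

lemma uA_pos (hα : α ∈ Ioo 0 1) (hx : x ∈ Ioc 0 m) : 0 < uA m α x :=
  intervalIntegral_pos_of_pos_on (continuous_vA.intervalIntegrable _ _)
    (fun _ ht => vA_pos hα ⟨ht.1, ht.2.trans_le hx.2⟩) hx.1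

end profile

section wA
variable {l α x : ℝ}

lemma wA_neg (hl : 0 ≤ l) (x : ℝ) : wA l α (-x) = -wA l α x := by
  have ha : 0 ≤ α ^ 2 * l / 2 := by positivity
  rcases lt_trichotomy x 0 with h | rfl | h
  · rw [wA, wA, if_pos (by linarith), if_neg (not_le.2 h), neg_neg]
  · simp [wA, ha]
  · rw [wA, wA, if_neg (by linarith), if_pos h.le, neg_neg]

lemma wA_nonneg (hl : 0 ≤ l) (hα : α ∈ Ioo 0 1) (hx : 0 ≤ x) : 0 ≤ wA l α x := by
  have : 0 ≤ α * l / 2 := by have := hα.1; positivity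
  rw [wA, if_pos hx]
  split_ifs
  · exact hx
  · positivity

lemma wA_sq (hl : 0 < l) (hα : α ∈ Ioo 0 1) (hx : x ∈ Icc (-(l / 2)) (l / 2)) :
    wA l α x ^ 2 = 2 * uA (l / 2) α x := by
  wlog hx0 : 0 ≤ x generalizing x
  · rw [← neg_neg x, wA_neg hl.le, neg_sq, uA_neg hα (by positivity)]
    exact this ⟨by linarith [hx.2], by linarith [hx.1]⟩ (by linarith)
  have h2 : 0 < 1 - α ^ 2 := by nlinarith [hα.1, hα.2]
  rw [wA, if_pos hx0]
  split_ifs with ha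
  · rw [uA_of_abs_le hα (by rw [abs_of_nonneg hx0]; linarith)]
    ring
  · have hax : α ^ 2 * (l / 2) ≤ x := by linarith
    have hy : 0 ≤ 1 - x / (l / 2) ∧ 1 - x / (l / 2) ≤ 1 - α ^ 2 := by
      constructor
      · rw [sub_nonneg, div_le_one (by positivity)]; exact hx.2
      · rw [sub_le_sub_iff_left, le_div_iff₀ (by positivity)]; exact hax
    have hQ : 0 ≤ 1 - (1 - x / (l / 2)) ^ 2 / (1 - α ^ 2) := by
      rw [sub_nonneg, div_le_one h2]; nlinarith
    rw [mul_pow, Real.sq_sqrt hQ, uA_of_ge hα (by positivity) hax]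
    field_simp

lemma differentiableAt_wA (hl : 0 < l) (hα : α ∈ Ioo 0 1) (hx : x ∈ Ioo (-(l / 2)) (l / 2))
    (hx0 : x ≠ 0) : DifferentiableAt ℝ (wA l α) x := by
  wlog hpos : 0 < x generalizing x
  · have h := this (x := -x) ⟨by linarith [hx.2], by linarith [hx.1]⟩ (neg_ne_zero.2 hx0)
      (by have := lt_of_le_of_ne (not_lt.1 hpos) hx0; linarith)
    have heq : wA l α = fun t => -wA l α (-t) := funext fun t => by rw [wA_neg hl.le, neg_neg]
    rw [heq]
    exact (h.comp x differentiableAt_id.neg).neg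
  have hev : wA l α =ᶠ[𝓝 x] fun t => √(2 * uA (l / 2) α t) := by
    filter_upwards [Ioo_mem_nhds hpos hx.2] with t ht
    rw [← wA_sq hl hα ⟨by linarith [ht.1], ht.2.le⟩,
      Real.sqrt_sq (wA_nonneg hl.le hα ht.1.le)]
  refine DifferentiableAt.congr_of_eventuallyEq ?_ hev
  exact (((hasDerivAt_uA x).const_mul 2).sqrt
    (by have := uA_pos hα ⟨hpos, hx.2.le⟩; positivity)).differentiableAt

lemma deriv_wA_mul_wA (hl : 0 < l) (hα : α ∈ Ioo 0 1) (hx : x ∈ Ioo (-(l / 2)) (l / 2))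
    (hx0 : x ≠ 0) : deriv (wA l α) x * wA l α x = vA (l / 2) α x := by
  have hev : (fun t => wA l α t ^ 2 / 2) =ᶠ[𝓝 x] uA (l / 2) α := by
    filter_upwards [Ioo_mem_nhds hx.1 hx.2] with t ht
    rw [wA_sq hl hα (Ioo_subset_Icc_self ht)]
    ring
  rw [mul_comm, ← deriv_sq_div_two (differentiableAt_wA hl hα hx hx0), hev.deriv_eq, deriv_uA]

lemma integral_deriv_wA_sq_mul_sq (hl : 0 < l) (hα : α ∈ Ioo 0 1) :
    ∫ x in (-(l / 2))..(l / 2), deriv (wA l α) x ^ 2 * wA l α x ^ 2 = l ^ 3 / 12 * α ^ 4 := by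
  have h : ∫ x in (-(l / 2))..(l / 2), deriv (wA l α) x ^ 2 * wA l α x ^ 2
      = ∫ x in (-(l / 2))..(l / 2), vA (l / 2) α x ^ 2 := by
    refine integral_congr_ae ?_
    filter_upwards [(countable_singleton (0 : ℝ)).ae_notMem volume,
      (countable_singleton (l / 2)).ae_notMem volume] with x hx0 hxl hx
    rw [uIoc_of_le (by linarith)] at hx
    rw [← deriv_wA_mul_wA hl hα ⟨hx.1, lt_of_le_of_ne hx.2 hxl⟩ hx0]
    ring
  rw [h, integral_vA_sq hα (by positivity)]
  ring

lemma eq_wA_of_mem_uIcc_of_sq_div_two_eq (hl : 0 < l) (hα : α ∈ Ioo 0 1)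
    (hx : x ∈ Icc (-(l / 2)) (l / 2)) {y : ℝ} (hy : y ∈ uIcc 0 x)
    (hyx : y ^ 2 / 2 = uA (l / 2) α x) : y = wA l α x := by
  have h : y ^ 2 = wA l α x ^ 2 := by rw [wA_sq hl hα hx]; linarith
  rcases le_total 0 x with hx0 | hx0
  · rw [uIcc_of_le hx0] at hy
    exact (sq_eq_sq₀ hy.1 (wA_nonneg hl.le hα hx0)).1 h
  · rw [uIcc_of_ge hx0] at hy
    have hneg := wA_nonneg (l := l) hl.le hα (neg_nonneg.2 hx0)
    rw [wA_neg hl.le] at hneg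
    have := (sq_eq_sq₀ (neg_nonneg.2 hy.2) hneg).1 (by rw [neg_sq, neg_sq, h])
    linarith

end wA

theorem integral_deriv_uA_sq_lt {m α : ℝ} (hm : 0 < m) (hα : α ∈ Ioo 0 1) {u : ℝ → ℝ}
    (hu : AbsolutelyContinuousOnInterval u (-m) m)
    (hu2 : IntervalIntegrable (fun x => deriv u x ^ 2) volume (-m) m) (hu0 : u 0 = 0)
    (hle : ∀ x ∈ Icc (-(α ^ 2 * m)) (α ^ 2 * m), u x ≤ x ^ 2 / 2)
    (hmass : ∫ x in (-m)..m, u x = ∫ x in (-m)..m, uA m α x)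
    (hne : ∃ t ∈ Icc (-m) m, u t ≠ uA m α t) :
    ∫ x in (-m)..m, deriv (uA m α) x ^ 2 < ∫ x in (-m)..m, deriv u x ^ 2 := by
  have hg := absolutelyContinuousOnInterval_uA (α := α) hm.le
  have hg' : AbsolutelyContinuousOnInterval (deriv (uA m α)) (-m) m := by
    rw [deriv_uA]; exact absolutelyContinuousOnInterval_vA _ _
  have hexp := hu.integral_deriv_sq_eq hu2 hg hg' (by rw [deriv_uA, vA_neg_self hα hm.le])
    (by rw [deriv_uA, vA_self hα hm.le])
  have hdiff : ContinuousOn (fun x => u x - uA m α x) (uIcc (-m) m) :=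
    hu.continuousOn.sub hg.continuousOn
  rw [deriv_uA, integral_deriv_vA_mul hα hm.le hdiff.intervalIntegrable,
    integral_sub hu.continuousOn.intervalIntegrable hg.continuousOn.intervalIntegrable, hmass,
    sub_self, mul_zero, sub_zero] at hexp
  have ha : -(α ^ 2 * m) ≤ α ^ 2 * m := by have := hα.1; nlinarith [hm]
  have hcore : ∫ x in (-(α ^ 2 * m))..(α ^ 2 * m), (u x - uA m α x) ≤ 0 := by
    refine (integral_mono_on ha (hdiff.intervalIntegrable.mono_set ?_) intervalIntegrable_const
      fun x hx => ?_).trans_eq integral_zero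
    · have := sq_mul_le_self hα hm.le
      exact uIcc_subset_uIcc (mem_uIcc.2 (.inl ⟨by linarith, by linarith⟩))
        (mem_uIcc.2 (.inl ⟨by linarith, this⟩))
    · rw [uA_of_abs_le hα (abs_le.2 hx), sub_nonpos]; exact hle x hx
  obtain ⟨t, ht, hut⟩ := hne
  have hR := hu.integral_deriv_sub_deriv_sq_pos hg
    (hu2.sub_sq hu.intervalIntegrable_deriv (by rw [deriv_uA]; exact continuous_vA.continuousOn))
    (by linarith) ⟨by linarith, hm.le⟩ (by simp [hu0, uA]) ht hut
  rw [deriv_uA] at hR ⊢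
  have hc : 0 ≤ 1 + α ^ 2 / (1 - α ^ 2) := by
    have : 0 < 1 - α ^ 2 := by nlinarith [hα.1, hα.2]
    positivity
  nlinarith [mul_nonpos_of_nonneg_of_nonpos hc hcore]

theorem stmt13 (l α : ℝ) (hl : 0 < l) (hα : α ∈ Set.Ioo (0 : ℝ) 1)
    (w w' : ℝ → ℝ) (C : NNReal)
    (hlip : LipschitzOnWith C w (Set.Icc (-(l/2)) (l/2)))
    (hderiv : ∀ᵐ x ∂(volume.restrict (Set.Icc (-(l/2)) (l/2))),
      HasDerivAt w (w' x) x ∧ 0 ≤ w' x ∧ w' x ≤ 1)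
    (h0 : w 0 = 0)
    (hL2 : (∫ x in (-(l/2))..(l/2), (w x) ^ 2)
        = ∫ x in (-(l/2))..(l/2), (wA l α x) ^ 2)
    (hne : ∃ x ∈ Set.Icc (-(l/2)) (l/2), w x ≠ wA l α x) :
    (∫ x in (-(l/2))..(l/2), (w' x) ^ 2 * (w x) ^ 2) > l ^ 3 / 12 * α ^ 4 ∧
    (∫ x in (-(l/2))..(l/2), (deriv (wA l α) x) ^ 2 * (wA l α x) ^ 2)
      = l ^ 3 / 12 * α ^ 4 := by
  refine ⟨?_, integral_deriv_wA_sq_mul_sq hl hα⟩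
  have hm : 0 < l / 2 := by positivity
  have hIcc : uIcc (-(l / 2)) (l / 2) = Icc (-(l / 2)) (l / 2) := uIcc_of_le (by linarith)
  have hw : AbsolutelyContinuousOnInterval w (-(l / 2)) (l / 2) :=
    (hIcc ▸ hlip).absolutelyContinuousOnInterval
  have hw_mem : ∀ x ∈ Icc (-(l / 2)) (l / 2), w x ∈ uIcc 0 x := by
    intro x hx
    have hsub : uIcc 0 x ⊆ Icc (-(l / 2)) (l / 2) := uIcc_subset_Icc ⟨by linarith, hm.le⟩ hx
    simpa [h0] using (hw.mono (hIcc ▸ hsub)).mem_uIcc_of_ae_deriv_mem_Icc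
      (ae_restrict_of_ae_restrict_of_subset hsub (hderiv.mono fun t ht => by
        rw [ht.1.deriv]; exact ht.2))
  have hw_abs : ∀ x ∈ Icc (-(l / 2)) (l / 2), |w x| ≤ |x| := fun x hx => by
    simpa using abs_sub_left_of_mem_uIcc (hw_mem x hx)
  set u : ℝ → ℝ := fun x => w x ^ 2 / 2
  have hu : AbsolutelyContinuousOnInterval u (-(l / 2)) (l / 2) := by
    convert (hw.fun_mul hw).const_mul (1 / 2) using 2 with x
    ring
  have hu2 : IntervalIntegrable (fun x => deriv u x ^ 2) volume (-(l / 2)) (l / 2) := by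
    refine intervalIntegrable_deriv_sq_of_ae_abs_le (K := l / 2) (by linarith) ?_
    filter_upwards [hderiv, ae_restrict_mem measurableSet_Icc] with x hx hxm
    have hwx := (hw_abs x hxm).trans (abs_le.2 hxm)
    rw [deriv_sq_div_two hx.1.differentiableAt, hx.1.deriv, abs_mul, abs_of_nonneg hx.2.1]
    nlinarith [abs_nonneg (w x), hx.2.1, hx.2.2]
  have hle : ∀ x ∈ Icc (-(α ^ 2 * (l / 2))) (α ^ 2 * (l / 2)), u x ≤ x ^ 2 / 2 := by
    intro x hx
    have ha := sq_mul_le_self hα hm.le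
    have := sq_le_sq.2 (hw_abs x ⟨by linarith [hx.1], by linarith [hx.2]⟩)
    simp only [u]
    linarith
  have hmass :
      ∫ x in (-(l / 2))..(l / 2), u x = ∫ x in (-(l / 2))..(l / 2), uA (l / 2) α x := by
    rw [intervalIntegral.integral_div, hL2, ← intervalIntegral.integral_div]
    exact integral_congr fun x hx => by rw [wA_sq hl hα (hIcc ▸ hx)]; ring
  have hne_u : ∃ t ∈ Icc (-(l / 2)) (l / 2), u t ≠ uA (l / 2) α t := by
    obtain ⟨t, ht, hwt⟩ := hne
    exact ⟨t, ht, fun h => hwt (eq_wA_of_mem_uIcc_of_sq_div_two_eq hl hα ht (hw_mem t ht) h)⟩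
  have hlt := integral_deriv_uA_sq_lt hm hα hu hu2 (by simp [u, h0]) hle hmass hne_u
  rw [deriv_uA, integral_vA_sq hα hm.le] at hlt
  rw [gt_iff_lt, integral_mul_sq_eq_integral_deriv_sq (by linarith) (hderiv.mono fun x hx => hx.1)]
  linarith
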